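/- arXiv:2312.15295 — 2 statements merged into one kernel-verified Lean document; each statement's English description precedes it below -/
import Mathlib

section
/- Let β₂ ∈ (0,1), ε > 0, and for a real sequence (g_j) define y_{k+1} := β₂ y_k + (1 − β₂) g_k² + ε with y₀ = 0. Then for every k ≥ 1: g_k / (√(β₂ y_k/(1−β₂^{k+1})) + ε) − g_k / (√(y_{k+1}/(1−β₂^{k+1})) + ε) ≤ (√(1−β₂) g_k² + √ε |g_k|) / ( (√(y_{k+1}/(1−β₂^{k+1})) + ε)(√(β₂ y_k/(1−β₂^{k+1})) + ε) √(1−β₂^{k+1}) ). -/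
set_option maxHeartbeats 1000000 in
theorem stmt_8 (β₂ ε : ℝ) (hβ0 : 0 < β₂) (hβ1 : β₂ < 1) (hε : 0 < ε)
    (g y : ℕ → ℝ) (hy0 : y 0 = 0)
    (hrec : ∀ k, y (k + 1) = β₂ * y k + (1 - β₂) * (g k) ^ 2 + ε) :
    ∀ k, 1 ≤ k →
      g k / (Real.sqrt (β₂ * y k / (1 - β₂ ^ (k + 1))) + ε)
          - g k / (Real.sqrt (y (k + 1) / (1 - β₂ ^ (k + 1))) + ε)
        ≤ (Real.sqrt (1 - β₂) * (g k) ^ 2 + Real.sqrt ε * |g k|)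
            / ((Real.sqrt (y (k + 1) / (1 - β₂ ^ (k + 1))) + ε)
                * (Real.sqrt (β₂ * y k / (1 - β₂ ^ (k + 1))) + ε)
                * Real.sqrt (1 - β₂ ^ (k + 1))) := by
  intro k hk
  have hyk : ∀ n, 0 ≤ y n := by
    intro n
    induction n with
    | zero => simp [hy0]
    | succ n ih =>
      rw [hrec]
      nlinarith [sq_nonneg (g n)]
  have hc : 0 < 1 - β₂ ^ (k + 1) := by
    have : β₂ ^ (k + 1) < 1 := pow_lt_one₀ hβ0.le hβ1 (by omega)
    linarith
  set a := g k with ha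
  set c := 1 - β₂ ^ (k + 1) with hcdef
  set A := Real.sqrt (β₂ * y k / c) with hAdef
  set B := Real.sqrt (y (k + 1) / c) with hBdef
  have hAnn : 0 ≤ A := Real.sqrt_nonneg _
  have hBnn : 0 ≤ B := Real.sqrt_nonneg _
  set D := (1 - β₂) * a ^ 2 + ε with hDdef
  have hDpos : 0 < D := by nlinarith [sq_nonneg a]
  have hy1 : D ≤ y (k + 1) := by
    rw [hrec]; nlinarith [hyk k]
  have hy1pos : 0 < y (k + 1) := lt_of_lt_of_le hDpos hy1
  have hBpos : 0 < B := Real.sqrt_pos.mpr (by positivity)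
  have hAle : A ≤ B := by
    apply Real.sqrt_le_sqrt
    gcongr
    rw [hrec]; nlinarith [sq_nonneg a]
  have hykk := hyk k
  have hA2 : A ^ 2 = β₂ * y k / c := Real.sq_sqrt (by positivity)
  have hB2 : B ^ 2 = y (k + 1) / c := Real.sq_sqrt (by positivity)
  have hscpos : 0 < Real.sqrt c := Real.sqrt_pos.mpr hc
  have hsum : 0 < A + B := by linarith
  have hdiff : B - A = D / (c * (A + B)) := by
    have h1 : B ^ 2 - A ^ 2 = D / c := by
      rw [hB2, hA2, hrec]; ring
    rw [eq_div_iff (by positivity)]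
    field_simp at h1
    nlinarith [h1]
  -- N = sqrt(1-β₂)*a^2 + sqrt ε * |a|
  set N := Real.sqrt (1 - β₂) * a ^ 2 + Real.sqrt ε * |a| with hNdef
  have hsD : Real.sqrt D * Real.sqrt D = D := Real.mul_self_sqrt hDpos.le
  have hNge : Real.sqrt D ≤ Real.sqrt (1 - β₂) * |a| + Real.sqrt ε := by
    have h1 : Real.sqrt D ≤ Real.sqrt ((1 - β₂) * a ^ 2) + Real.sqrt ε := by
      have h := Real.sqrt_le_sqrt (show D ≤ (Real.sqrt ((1 - β₂) * a ^ 2) + Real.sqrt ε) ^ 2 by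
        nlinarith [Real.sq_sqrt (show (0:ℝ) ≤ (1 - β₂) * a ^ 2 by nlinarith [sq_nonneg a]),
          Real.sq_sqrt hε.le, Real.sqrt_nonneg ((1 - β₂) * a ^ 2), Real.sqrt_nonneg ε])
      rwa [Real.sqrt_sq (by positivity)] at h
    have h2 : Real.sqrt ((1 - β₂) * a ^ 2) = Real.sqrt (1 - β₂) * |a| := by
      rw [Real.sqrt_mul (by linarith), Real.sqrt_sq_eq_abs]
    linarith [h1, h2.symm.le, h2.le]
  have hsc2 : Real.sqrt c * Real.sqrt c = c := Real.mul_self_sqrt hc.le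
  have hcAB : Real.sqrt c * Real.sqrt D ≤ c * (A + B) := by
    have hBval : c * B = Real.sqrt c * Real.sqrt (y (k + 1)) := by
      rw [hBdef, Real.sqrt_div hy1pos.le]
      calc c * (Real.sqrt (y (k + 1)) / Real.sqrt c)
          = (c / Real.sqrt c) * Real.sqrt (y (k + 1)) := by ring
        _ = Real.sqrt c * Real.sqrt (y (k + 1)) := by rw [Real.div_sqrt]
    have hyD : Real.sqrt D ≤ Real.sqrt (y (k + 1)) := Real.sqrt_le_sqrt hy1
    calc Real.sqrt c * Real.sqrt D ≤ Real.sqrt c * Real.sqrt (y (k + 1)) := by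
          exact mul_le_mul_of_nonneg_left hyD hscpos.le
      _ = c * B := hBval.symm
      _ ≤ c * (A + B) := by nlinarith
  have key : |a| * (B - A) ≤ N / Real.sqrt c := by
    rw [hdiff, ← mul_div_assoc, div_le_div_iff₀ (by positivity) hscpos]
    have hNfac : N = |a| * (Real.sqrt (1 - β₂) * |a| + Real.sqrt ε) := by
      rw [hNdef, ← sq_abs]; ring
    have hmm := mul_le_mul hNge hcAB (by positivity) (by positivity)
    have h3 : D * Real.sqrt c = Real.sqrt D * (Real.sqrt c * Real.sqrt D) := by
      conv_lhs => rw [← hsD]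
      ring
    have step : D * Real.sqrt c ≤ (Real.sqrt (1 - β₂) * |a| + Real.sqrt ε) * (c * (A + B)) := by
      rw [h3]; exact hmm
    calc |a| * D * Real.sqrt c = |a| * (D * Real.sqrt c) := by ring
      _ ≤ |a| * ((Real.sqrt (1 - β₂) * |a| + Real.sqrt ε) * (c * (A + B))) :=
          mul_le_mul_of_nonneg_left step (abs_nonneg a)
      _ = N * (c * (A + B)) := by rw [hNfac]; ring
  have hAε : 0 < A + ε := by linarith
  have hBε : 0 < B + ε := by linarith
  have lhs_eq : a / (A + ε) - a / (B + ε) = a * (B - A) / ((A + ε) * (B + ε)) := by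
    field_simp; ring
  have step1 : a * (B - A) ≤ |a| * (B - A) :=
    mul_le_mul_of_nonneg_right (le_abs_self a) (by linarith)
  have rhs_eq : N / ((B + ε) * (A + ε) * Real.sqrt c)
      = (N / Real.sqrt c) / ((A + ε) * (B + ε)) := by
    rw [div_div]; congr 1; ring
  rw [lhs_eq, rhs_eq]
  exact (div_le_div_iff_of_pos_right (by positivity)).mpr (le_trans step1 key)
end

section
/- Let β₂ ∈ (0,1), ε > 0, and define s_{k+1} := β₂ s_k + ε with s₀ = 0. Then s_{k+1} = ε Σ_{j=0}^{k} β₂^j and, for any real g, g/(√(β₂ s_k/(1−β₂^{k+1})) + ε) − g/(√(s_{k+1}/(1−β₂^{k+1})) + ε) ≤ √ε |g| / ( (√(s_{k+1}/(1−β₂^{k+1})) + ε)(√(β₂ s_k/(1−β₂^{k+1})) + ε) √(1−β₂^{k+1}) ). -/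
theorem stmt_9 (β₂ ε : ℝ) (hβ0 : 0 < β₂) (hβ1 : β₂ < 1) (hε : 0 < ε)
    (s : ℕ → ℝ) (hs0 : s 0 = 0)
    (hrec : ∀ k, s (k + 1) = β₂ * s k + ε) :
    ∀ k, s (k + 1) = ε * ∑ j ∈ Finset.range (k + 1), β₂ ^ j
      ∧ ∀ g : ℝ,
        g / (Real.sqrt (β₂ * s k / (1 - β₂ ^ (k + 1))) + ε)
            - g / (Real.sqrt (s (k + 1) / (1 - β₂ ^ (k + 1))) + ε)
          ≤ Real.sqrt ε * |g|
              / ((Real.sqrt (s (k + 1) / (1 - β₂ ^ (k + 1))) + ε)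
                  * (Real.sqrt (β₂ * s k / (1 - β₂ ^ (k + 1))) + ε)
                  * Real.sqrt (1 - β₂ ^ (k + 1))) := by
  have hsnn : ∀ k, 0 ≤ s k := by
    intro k
    induction k with
    | zero => simp [hs0]
    | succ n ih =>
      rw [hrec]
      positivity
  intro k
  constructor
  · induction k with
    | zero => simp [hrec, hs0]
    | succ n ih =>
      rw [hrec, ih, Finset.sum_range_succ' _ (n + 1)]
      simp only [Finset.mul_sum, mul_add, mul_one, pow_zero]
      congr 1
      exact Finset.sum_congr rfl fun x _ => by rw [pow_succ]; ring
  · intro g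
    have hD : 0 < 1 - β₂ ^ (k + 1) := by
      have : β₂ ^ (k + 1) < 1 := pow_lt_one₀ hβ0.le hβ1 (Nat.succ_ne_zero k)
      linarith
    set D := 1 - β₂ ^ (k + 1) with hDdef
    set a := β₂ * s k / D with hadef
    set b := s (k + 1) / D with hbdef
    have ha : 0 ≤ a := by
      apply div_nonneg _ hD.le
      exact mul_nonneg hβ0.le (hsnn k)
    have hba : b = a + ε / D := by
      rw [hadef, hbdef, hrec, add_div]
    have hsqD : 0 < Real.sqrt D := Real.sqrt_pos.mpr hD
    have hsa : 0 < Real.sqrt a + ε := by positivity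
    have hsb : 0 < Real.sqrt b + ε := by positivity
    -- √b ≤ √a + √ε/√D
    have hsub : Real.sqrt b - Real.sqrt a ≤ Real.sqrt ε / Real.sqrt D := by
      have hc : (0:ℝ) ≤ ε / D := by positivity
      have h1 : Real.sqrt b ≤ Real.sqrt a + Real.sqrt (ε / D) := by
        rw [hba]
        have hsq : a + ε / D ≤ (Real.sqrt a + Real.sqrt (ε / D)) ^ 2 := by
          have e1 := Real.sq_sqrt ha
          have e2 := Real.sq_sqrt hc
          nlinarith [Real.sqrt_nonneg a, Real.sqrt_nonneg (ε / D)]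
        calc Real.sqrt (a + ε / D) ≤ Real.sqrt ((Real.sqrt a + Real.sqrt (ε / D)) ^ 2) :=
              Real.sqrt_le_sqrt hsq
          _ = Real.sqrt a + Real.sqrt (ε / D) := Real.sqrt_sq (by positivity)
      have h2 : Real.sqrt (ε / D) = Real.sqrt ε / Real.sqrt D := Real.sqrt_div hε.le D
      linarith
    have hsubnn : 0 ≤ Real.sqrt b - Real.sqrt a := by
      have : Real.sqrt a ≤ Real.sqrt b := by
        apply Real.sqrt_le_sqrt
        rw [hba]; nlinarith [div_nonneg hε.le hD.le]
      linarith
    have key : g / (Real.sqrt a + ε) - g / (Real.sqrt b + ε)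
        = g * (Real.sqrt b - Real.sqrt a) / ((Real.sqrt b + ε) * (Real.sqrt a + ε)) := by
      field_simp
      ring
    rw [key]
    have hnum : g * (Real.sqrt b - Real.sqrt a) ≤ |g| * (Real.sqrt ε / Real.sqrt D) := by
      calc g * (Real.sqrt b - Real.sqrt a) ≤ |g| * (Real.sqrt b - Real.sqrt a) :=
            mul_le_mul_of_nonneg_right (le_abs_self g) hsubnn
        _ ≤ |g| * (Real.sqrt ε / Real.sqrt D) :=
            mul_le_mul_of_nonneg_left hsub (abs_nonneg g)
    calc g * (Real.sqrt b - Real.sqrt a) / ((Real.sqrt b + ε) * (Real.sqrt a + ε))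
        ≤ |g| * (Real.sqrt ε / Real.sqrt D) / ((Real.sqrt b + ε) * (Real.sqrt a + ε)) := by
          gcongr
      _ = Real.sqrt ε * |g| / ((Real.sqrt b + ε) * (Real.sqrt a + ε) * Real.sqrt D) := by
          field_simp
end
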